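/- Let k, t1, t2 be integers with k > t1 > t2 ≥ 2, and let S = {π1, …, πn} (n ≥ 3) be a (k; k−t1, k−t2)-SPID in a finite-dimensional vector space V over a field with dim⟨S⟩ = k + (n−1)(t1−1) + 1, ordered so that δ(S) = (k, t1, t1−1, …, t1−1), and such that S contains no (k−t1)-sunflower of maximal dimension with at least three petals. Then dim(π_j ∩ ⟨π1, π2⟩) = k − t1 + 1 for all j = 3, …, n. -/
import Mathlib


open Module

variable {F : Type*} [Field F] {V : Type*} [AddCommGroup V] [Module F V]
  [FiniteDimensional F V]

/-- The subspace `⟨π_1, …, π_j⟩` (1-based), i.e. the span of the `π i` with `(i : ℕ) < j`. -/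
def pspan {n : ℕ} (π : Fin n → Submodule F V) (j : ℕ) : Submodule F V :=
  ⨆ i : Fin n, ⨆ _ : (i : ℕ) < j, π i

/-- The 1-based difference sequence `δ_j = dim⟨π_1,…,π_j⟩ - dim⟨π_1,…,π_{j-1}⟩`. -/
noncomputable def delta {n : ℕ} (π : Fin n → Submodule F V) (j : ℕ) : ℕ :=
  finrank F ↥(pspan π j) - finrank F ↥(pspan π (j - 1))

set_option linter.unusedSectionVars false in
lemma pspan_zero {n : ℕ} (π : Fin n → Submodule F V) : pspan π 0 = ⊥ := by
  simp [pspan]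

set_option linter.unusedSectionVars false in
lemma pspan_mono {n : ℕ} (π : Fin n → Submodule F V) {a b : ℕ} (h : a ≤ b) :
    pspan π a ≤ pspan π b := by
  refine iSup_le fun i => iSup_le fun hi => ?_
  exact le_iSup_of_le i (le_iSup_of_le (lt_of_lt_of_le hi h) le_rfl)

set_option linter.unusedSectionVars false in
lemma le_pspan {n : ℕ} (π : Fin n → Submodule F V) {i : Fin n} {m : ℕ} (h : (i : ℕ) < m) :
    π i ≤ pspan π m :=
  le_iSup_of_le i (le_iSup_of_le h le_rfl)

set_option linter.unusedSectionVars false in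
lemma pspan_succ {n : ℕ} (π : Fin n → Submodule F V) {j : ℕ} (hj : j < n) :
    pspan π (j + 1) = pspan π j ⊔ π ⟨j, hj⟩ := by
  apply le_antisymm
  · refine iSup_le fun i => iSup_le fun hi => ?_
    rcases lt_or_eq_of_le (Nat.lt_succ_iff.mp hi) with h | h
    · exact le_sup_of_le_left (le_pspan π h)
    · have : (⟨j, hj⟩ : Fin n) = i := Fin.ext h.symm
      rw [← this]
      exact le_sup_right
  · exact sup_le (pspan_mono π (Nat.le_succ j)) (le_pspan π (Nat.lt_succ_self j))

/-- A `(k; ℓ_1, …, ℓ_v)`-SPID, where `L` is the set of prescribed intersection dimensions: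
a family of pairwise distinct `k`-dimensional subspaces, any two distinct members meeting
in a dimension belonging to `L`, and every value of `L` being attained. -/
def IsSPID {n : ℕ} (k : ℕ) (L : Set ℕ) (π : Fin n → Submodule F V) : Prop :=
  Function.Injective π ∧
  (∀ i, finrank F ↥(π i) = k) ∧
  (∀ i j, i ≠ j → finrank F ↥(π i ⊓ π j) ∈ L) ∧
  ∀ ℓ ∈ L, ∃ i j, i ≠ j ∧ finrank F ↥(π i ⊓ π j) = ℓ

/-- An `ℓ`-junta: all members pass through a common `ℓ`-dimensional subspace. -/
def IsJunta {n : ℕ} (ℓ : ℕ) (π : Fin n → Submodule F V) : Prop :=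
  ∃ C : Submodule F V, finrank F ↥C = ℓ ∧ ∀ i, C ≤ π i

/-- `S` contains an `ℓ`-sunflower of maximal dimension with `p` petals (all petals being
`k`-dimensional): `p` members of `S` pairwise meeting exactly in a common `ℓ`-dimensional
center and spanning a subspace of dimension `ℓ + p(k - ℓ)`. -/
def HasMaxSunflower (k ℓ p : ℕ) (S : Set (Submodule F V)) : Prop :=
  ∃ A : Finset (Submodule F V), ↑A ⊆ S ∧ A.card = p ∧
    ∃ C : Submodule F V, finrank F ↥C = ℓ ∧
      (∀ W ∈ A, ∀ W' ∈ A, W ≠ W' → W ⊓ W' = C) ∧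
      finrank F ↥(A.sup id) = ℓ + p * (k - ℓ)

/-- Inside the proof of Proposition 2.3: under the same hypotheses, every member other
than the first two meets `⟨π_1, π_2⟩` in dimension `k - t₁ + 1`. -/
theorem statement9 {n k t1 t2 : ℕ} (h1 : 2 ≤ t2) (h2 : t2 < t1) (h3 : t1 < k)
    (hn : 3 ≤ n) (π : Fin n → Submodule F V) (hS : IsSPID k {k - t1, k - t2} π)
    (hspan : finrank F ↥(⨆ i, π i) = k + (n - 1) * (t1 - 1) + 1)
    (hd1 : delta π 1 = k) (hd2 : delta π 2 = t1)
    (hd : ∀ j, 3 ≤ j → j ≤ n → delta π j = t1 - 1)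
    (hnosun : ¬ ∃ p, 3 ≤ p ∧ HasMaxSunflower k (k - t1) p (Set.range π)) :
    ∀ j : Fin n, 2 ≤ (j : ℕ) →
      finrank F ↥(π j ⊓ (π ⟨0, by omega⟩ ⊔ π ⟨1, by omega⟩)) = k - t1 + 1 := by
  classical
  intro j hj
  obtain ⟨hinj, hdim, hint, -⟩ := hS
  have hn0 : 0 < n := by omega
  have hn1 : 1 < n := by omega
  set i0 : Fin n := ⟨0, hn0⟩ with hi0def
  set i1 : Fin n := ⟨1, hn1⟩ with hi1def
  have h01 : i0 ≠ i1 := by simp [hi0def, hi1def, Fin.ext_iff]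
  have h0j : i0 ≠ j := by simp [hi0def, Fin.ext_iff]; omega
  have h1j : i1 ≠ j := by simp [hi1def, Fin.ext_iff]; omega
  -- pspan facts
  have hp1 : pspan π 1 = π i0 := by
    rw [show (1 : ℕ) = 0 + 1 from rfl, pspan_succ π hn0, pspan_zero, bot_sup_eq]
  have hp2 : pspan π 2 = π i0 ⊔ π i1 := by
    rw [show (2 : ℕ) = 1 + 1 from rfl, pspan_succ π hn1, hp1]
  have e0 : finrank F ↥(pspan π 0) = 0 := by rw [pspan_zero]; exact finrank_bot F V
  have m01 : finrank F ↥(pspan π 1) ≤ finrank F ↥(pspan π 2) :=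
    Submodule.finrank_mono (pspan_mono π (by omega))
  have e1 : finrank F ↥(pspan π 1) = k := by
    unfold delta at hd1
    rw [show pspan π (1 - 1) = pspan π 0 from rfl] at hd1
    omega
  have e2 : finrank F ↥(pspan π 2) = k + t1 := by
    unfold delta at hd2
    rw [show pspan π (2 - 1) = pspan π 1 from rfl] at hd2
    omega
  -- key: dim (π j ⊓ pspan π j) = k - t1 + 1
  have hJn : (j : ℕ) < n := j.isLt
  have hdJ : delta π ((j : ℕ) + 1) = t1 - 1 := hd _ (by omega) (by omega)
  have hsucc : pspan π ((j : ℕ) + 1) = pspan π (j : ℕ) ⊔ π j := by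
    rw [pspan_succ π hJn]
  have hform : finrank F ↥(pspan π (j : ℕ) ⊔ π j) + finrank F ↥(pspan π (j : ℕ) ⊓ π j)
      = finrank F ↥(pspan π (j : ℕ)) + finrank F ↥(π j) :=
    Submodule.finrank_sup_add_finrank_inf_eq _ _
  have hle : finrank F ↥(pspan π (j : ℕ)) ≤ finrank F ↥(pspan π ((j : ℕ) + 1)) :=
    Submodule.finrank_mono (pspan_mono π (Nat.le_succ _))
  have hkey : finrank F ↥(π j ⊓ pspan π (j : ℕ)) = k - t1 + 1 := by
    unfold delta at hdJ
    rw [Nat.add_sub_cancel, hsucc] at hdJ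
    rw [hsucc] at hle
    have hdj : finrank F ↥(π j) = k := hdim j
    rw [inf_comm]
    omega
  -- upper bound
  have hsub2j : π j ⊓ pspan π 2 ≤ π j ⊓ pspan π (j : ℕ) :=
    inf_le_inf_left _ (pspan_mono π hj)
  have hub : finrank F ↥(π j ⊓ pspan π 2) ≤ k - t1 + 1 := by
    rw [← hkey]; exact Submodule.finrank_mono hsub2j
  -- lower bounds via intersections with π i0, π i1
  have hle0 : π i0 ⊓ π j ≤ π j ⊓ pspan π 2 :=
    le_inf inf_le_right (le_trans inf_le_left (hp2 ▸ le_sup_left))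
  have hle1 : π i1 ⊓ π j ≤ π j ⊓ pspan π 2 :=
    le_inf inf_le_right (le_trans inf_le_left (hp2 ▸ le_sup_right))
  have hd0 := hint i0 j h0j
  have hd1' := hint i1 j h1j
  simp only [Set.mem_insert_iff, Set.mem_singleton_iff] at hd0 hd1'
  have hgoal : finrank F ↥(π j ⊓ pspan π 2) = k - t1 + 1 := by
    rcases hd0 with hd0 | hd0
    · rcases hd1' with hd1' | hd1'
      · -- both intersections have dim k - t1 : sunflower contradiction
        by_contra hne
        have hlow : k - t1 ≤ finrank F ↥(π j ⊓ pspan π 2) := by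
          rw [← hd0]; exact Submodule.finrank_mono hle0
        have hdeq : finrank F ↥(π j ⊓ pspan π 2) = k - t1 := by omega
        have eq0 : π i0 ⊓ π j = π j ⊓ pspan π 2 :=
          Submodule.eq_of_le_of_finrank_eq hle0 (by omega)
        have eq1 : π i1 ⊓ π j = π j ⊓ pspan π 2 :=
          Submodule.eq_of_le_of_finrank_eq hle1 (by omega)
        have hk0 : finrank F ↥(π i0) = k := hdim i0
        have hk1 : finrank F ↥(π i1) = k := hdim i1
        have hf01 : finrank F ↥(π i0 ⊔ π i1) + finrank F ↥(π i0 ⊓ π i1)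
            = finrank F ↥(π i0) + finrank F ↥(π i1) :=
          Submodule.finrank_sup_add_finrank_inf_eq _ _
        have hsup01 : finrank F ↥(π i0 ⊔ π i1) = k + t1 := by rw [← hp2]; exact e2
        have hCd : finrank F ↥(π i0 ⊓ π i1) = k - t1 := by omega
        have hDC : π i0 ⊓ π j ≤ π i0 ⊓ π i1 := by
          refine le_inf inf_le_left ?_
          rw [eq0, ← eq1]; exact inf_le_left
        have c0j : π i0 ⊓ π j = π i0 ⊓ π i1 :=
          Submodule.eq_of_le_of_finrank_eq hDC (by omega)
        have c1j : π i1 ⊓ π j = π i0 ⊓ π i1 := by rw [eq1, ← eq0, c0j]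
        -- build the sunflower
        apply hnosun
        refine ⟨3, le_refl 3, {π i0, π i1, π j}, ?_, ?_, π i0 ⊓ π i1, hCd, ?_, ?_⟩
        · intro W hW
          simp only [Finset.coe_insert, Finset.coe_singleton, Set.mem_insert_iff,
            Set.mem_singleton_iff] at hW
          rcases hW with rfl | rfl | rfl
          · exact ⟨i0, rfl⟩
          · exact ⟨i1, rfl⟩
          · exact ⟨j, rfl⟩
        · exact Finset.card_eq_three.mpr
            ⟨π i0, π i1, π j, hinj.ne h01, hinj.ne h0j, hinj.ne h1j, rfl⟩
        · intro W hW W' hW' hne'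
          simp only [Finset.mem_insert, Finset.mem_singleton] at hW hW'
          rcases hW with rfl | rfl | rfl <;> rcases hW' with rfl | rfl | rfl
          · exact absurd rfl hne'
          · rfl
          · exact c0j
          · exact inf_comm _ _
          · exact absurd rfl hne'
          · exact c1j
          · exact (inf_comm _ _).trans c0j
          · exact (inf_comm _ _).trans c1j
          · exact absurd rfl hne'
        · have hsup : ({π i0, π i1, π j} : Finset (Submodule F V)).sup id
              = pspan π 2 ⊔ π j := by
            simp only [Finset.sup_insert, Finset.sup_singleton, id]
            rw [hp2, sup_assoc]
          rw [hsup]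
          have hf := Submodule.finrank_sup_add_finrank_inf_eq (pspan π 2) (π j)
          rw [inf_comm] at hf
          have hdj : finrank F ↥(π j) = k := hdim j
          omega
      · -- dim(π i1 ⊓ π j) = k - t2 ≥ k - t1 + 1
        have hlow : k - t2 ≤ finrank F ↥(π j ⊓ pspan π 2) := by
          rw [← hd1']; exact Submodule.finrank_mono hle1
        omega
    · have hlow : k - t2 ≤ finrank F ↥(π j ⊓ pspan π 2) := by
        rw [← hd0]; exact Submodule.finrank_mono hle0
      omega
  rw [← hp2]
  exact hgoal
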